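/- arXiv:2208.05709 — 3 statements merged into one kernel-verified Lean document; each statement's English description precedes it below -/
import Mathlib

section
/- Let d ≥ 1, let Ω ⊆ ℝ^d be open, let B : Ω → ℝ be locally integrable, and let u : Ω → ℝ be locally Lipschitz. Then u is a weak solution with bulk term B on Ω if and only if u is both a weak subsolution and a weak supersolution with bulk term B on Ω. -/
open MeasureTheory Set Filter Topology
noncomputable section

/-- Euclidean space `ℝ^m`. -/
abbrev Euc (m : ℕ) : Type := EuclideanSpace ℝ (Fin m)

/-- `f` is locally Lipschitz on `Ω`: Lipschitz on every compact subset of `Ω`. -/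
def LocLipOn {m : ℕ} (Ω : Set (Euc m)) (f : Euc m → ℝ) : Prop :=
  ∀ A : Set (Euc m), IsCompact A → A ⊆ Ω → ∃ L : NNReal, LipschitzOnWith L f A

/-- The functional `J_B^A(v) = ∫_A (‖∇v‖ + v·B)`. -/
noncomputable def Jfun {m : ℕ} (B : Euc m → ℝ) (A : Set (Euc m)) (v : Euc m → ℝ) : ℝ :=
  ∫ x in A, (‖gradient v x‖ + v x * B x)

/-- `u` is a weak solution with bulk term `B` on `Ω`. -/
def IsWeakSol {m : ℕ} (Ω : Set (Euc m)) (B : Euc m → ℝ) (u : Euc m → ℝ) : Prop :=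
  ∀ A : Set (Euc m), IsCompact A → A ⊆ Ω →
    ∀ v : Euc m → ℝ, LocLipOn Ω v → {x | v x ≠ u x} ⊆ interior A →
      Jfun B A u ≤ Jfun B A v

/-- `u` is a weak subsolution with bulk term `B` on `Ω`: competitors lie below `u`. -/
def IsWeakSub {m : ℕ} (Ω : Set (Euc m)) (B : Euc m → ℝ) (u : Euc m → ℝ) : Prop :=
  ∀ A : Set (Euc m), IsCompact A → A ⊆ Ω →
    ∀ v : Euc m → ℝ, LocLipOn Ω v → (∀ x, v x ≤ u x) → {x | v x ≠ u x} ⊆ interior A →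
      Jfun B A u ≤ Jfun B A v

/-- `u` is a weak supersolution with bulk term `B` on `Ω`: competitors lie above `u`. -/
def IsWeakSup {m : ℕ} (Ω : Set (Euc m)) (B : Euc m → ℝ) (u : Euc m → ℝ) : Prop :=
  ∀ A : Set (Euc m), IsCompact A → A ⊆ Ω →
    ∀ v : Euc m → ℝ, LocLipOn Ω v → (∀ x, u x ≤ v x) → {x | v x ≠ u x} ⊆ interior A →
      Jfun B A u ≤ Jfun B A v


/-! The key point is the lattice identity `J(v ⊓ u) + J(v ⊔ u) = J(v) + J(u)`: any
competitor `v` yields the sub-competitor `v ⊓ u` and the super-competitor `v ⊔ u`, both equal to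
`u` wherever `v` is. The identity holds pointwise almost everywhere: away from `{v = u}` each of
`v ⊓ u`, `v ⊔ u` coincides near the point with `v` or `u`, and at almost every point of
`{v = u}` all four functions have the same derivative, by a Lebesgue density argument. -/

section Lattice

variable {X : Type*} [PseudoEMetricSpace X] {f g : X → ℝ} {Kf Kg : NNReal} {s : Set X}

theorem LipschitzOnWith.inf (hf : LipschitzOnWith Kf f s) (hg : LipschitzOnWith Kg g s) :
    LipschitzOnWith (max Kf Kg) (f ⊓ g) s :=
  lipschitzOnWith_iff_restrict.2 (hf.to_restrict.min hg.to_restrict)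

theorem LipschitzOnWith.sup (hf : LipschitzOnWith Kf f s) (hg : LipschitzOnWith Kg g s) :
    LipschitzOnWith (max Kf Kg) (f ⊔ g) s :=
  lipschitzOnWith_iff_restrict.2 (hf.to_restrict.max hg.to_restrict)

end Lattice

theorem IsOpen.measurableSet_sep_eq {X Y : Type*} [TopologicalSpace X] [MeasurableSpace X]
    [OpensMeasurableSpace X] [TopologicalSpace Y] [T2Space Y] {f g : X → Y} {U : Set X}
    (hU : IsOpen U) (hf : ContinuousOn f U) (hg : ContinuousOn g U) :
    MeasurableSet {x ∈ U | f x = g x} := by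
  have hne : IsOpen (U ∩ (fun x => (f x, g x)) ⁻¹' (Set.diagonal Y)ᶜ) :=
    (hf.prodMk hg).isOpen_inter_preimage hU isClosed_diagonal.isOpen_compl
  convert hU.measurableSet.diff hne.measurableSet using 1
  ext x
  simp

section Derivative

variable {E : Type*} [NormedAddCommGroup E] [NormedSpace ℝ E]

theorem fderiv_inf_of_lt {f g : E → ℝ} {x : E} (hf : ContinuousAt f x) (hg : ContinuousAt g x)
    (hlt : f x < g x) : fderiv ℝ (f ⊓ g) x = fderiv ℝ f x :=
  Filter.EventuallyEq.fderiv_eq <| (hf.eventually_lt hg hlt).mono fun _ hy => inf_eq_left.2 hy.le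

theorem fderiv_sup_of_lt {f g : E → ℝ} {x : E} (hf : ContinuousAt f x) (hg : ContinuousAt g x)
    (hlt : f x < g x) : fderiv ℝ (f ⊔ g) x = fderiv ℝ g x :=
  Filter.EventuallyEq.fderiv_eq <| (hf.eventually_lt hg hlt).mono fun _ hy => sup_eq_right.2 hy.le

variable [FiniteDimensional ℝ E] [MeasurableSpace E] [BorelSpace E] {μ : Measure E}
  [μ.IsAddHaarMeasure]

theorem LipschitzOnWith.ae_differentiableAt_of_isOpen {F : Type*} [NormedAddCommGroup F]
    [NormedSpace ℝ F] [FiniteDimensional ℝ F] {f : E → F} {K : NNReal} {U : Set E}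
    (hf : LipschitzOnWith K f U) (hU : IsOpen U) :
    ∀ᵐ x ∂μ, x ∈ U → DifferentiableAt ℝ f x := by
  filter_upwards [hf.ae_differentiableWithinAt_of_mem] with x hx hxU
  exact (hx hxU).differentiableAt (hU.mem_nhds hxU)

/-- Through the embedding `t ↦ t • e` this is a case of
`ApproximatesLinearOn.norm_fderiv_sub_le`, itself a Lebesgue density argument. -/
theorem ae_restrict_eq_zero_of_hasFDerivWithinAt_of_eqOn_zero {h : E → ℝ}
    {h' : E → E →L[ℝ] ℝ} {s : Set E} (hs : MeasurableSet s) (h0 : EqOn h 0 s)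
    (hh' : ∀ x ∈ s, HasFDerivWithinAt h (h' x) s x) :
    ∀ᵐ x ∂μ.restrict s, h' x = 0 := by
  rcases subsingleton_or_nontrivial E with hE | hE
  · exact ae_of_all _ fun x => Subsingleton.elim _ _
  obtain ⟨e, he⟩ := exists_ne (0 : E)
  set φ : ℝ →L[ℝ] E := ContinuousLinearMap.toSpanSingleton ℝ e
  have happrox : ApproximatesLinearOn (φ ∘ h) (0 : E →L[ℝ] E) s 0 := by
    intro x hx y hy
    simp [h0 hx, h0 hy]
  filter_upwards [happrox.norm_fderiv_sub_le μ hs (fun x => φ.comp (h' x))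
    fun x hx => φ.hasFDerivAt.comp_hasFDerivWithinAt x (hh' x hx)] with x hx
  ext v
  have hφ : φ.comp (h' x) = 0 := by simpa using hx
  simpa [φ, he] using congrArg (fun ψ : E →L[ℝ] E => ψ v) hφ

theorem ae_fderiv_eq_of_eqOn {f g : E → ℝ} {s : Set E} (hs : MeasurableSet s) (hfg : EqOn f g s) :
    ∀ᵐ x ∂μ, x ∈ s → DifferentiableAt ℝ f x → DifferentiableAt ℝ g x →
      fderiv ℝ f x = fderiv ℝ g x := by
  set t := s ∩ {x | DifferentiableAt ℝ f x} ∩ {x | DifferentiableAt ℝ g x}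
  have ht : MeasurableSet t :=
    (hs.inter (measurableSet_of_differentiableAt ℝ f)).inter
      (measurableSet_of_differentiableAt ℝ g)
  have hzero := ae_restrict_eq_zero_of_hasFDerivWithinAt_of_eqOn_zero (μ := μ) (h := f - g) ht
    (fun x hx => sub_eq_zero.2 (hfg hx.1.1))
    fun x hx => (hx.1.2.hasFDerivAt.sub hx.2.hasFDerivAt).hasFDerivWithinAt
  filter_upwards [(ae_restrict_iff' ht).1 hzero] with x hx hxs hf hg
  exact sub_eq_zero.1 (hx ⟨⟨hxs, hf⟩, hg⟩)

theorem ae_norm_fderiv_inf_add_norm_fderiv_sup {f g : E → ℝ} {Kf Kg : NNReal} {U : Set E}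
    (hU : IsOpen U) (hf : LipschitzOnWith Kf f U) (hg : LipschitzOnWith Kg g U) :
    ∀ᵐ x ∂μ, x ∈ U →
      ‖fderiv ℝ (f ⊓ g) x‖ + ‖fderiv ℝ (f ⊔ g) x‖ = ‖fderiv ℝ f x‖ + ‖fderiv ℝ g x‖ := by
  set S := {x ∈ U | f x = g x}
  have hS : MeasurableSet S := hU.measurableSet_sep_eq hf.continuousOn hg.continuousOn
  have hfS : EqOn f g S := fun x hx => hx.2
  have hinfS : EqOn (f ⊓ g) g S := fun x hx => by simp [hx.2]
  have hsupS : EqOn (f ⊔ g) g S := fun x hx => by simp [hx.2]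
  filter_upwards [hf.ae_differentiableAt_of_isOpen hU, hg.ae_differentiableAt_of_isOpen hU,
    (hf.inf hg).ae_differentiableAt_of_isOpen hU, (hf.sup hg).ae_differentiableAt_of_isOpen hU,
    ae_fderiv_eq_of_eqOn hS hfS, ae_fderiv_eq_of_eqOn hS hinfS, ae_fderiv_eq_of_eqOn hS hsupS]
    with x hfd hgd hinfd hsupd hfeq hinfeq hsupeq hxU
  have hfc := hf.continuousOn.continuousAt (hU.mem_nhds hxU)
  have hgc := hg.continuousOn.continuousAt (hU.mem_nhds hxU)
  rcases lt_trichotomy (f x) (g x) with hlt | heq | hgt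
  · rw [fderiv_inf_of_lt hfc hgc hlt, fderiv_sup_of_lt hfc hgc hlt]
  · have hxS : x ∈ S := ⟨hxU, heq⟩
    rw [hfeq hxS (hfd hxU) (hgd hxU), hinfeq hxS (hinfd hxU) (hgd hxU),
      hsupeq hxS (hsupd hxU) (hgd hxU)]
  · rw [inf_comm, sup_comm, fderiv_inf_of_lt hgc hfc hgt, fderiv_sup_of_lt hgc hfc hgt, add_comm]

end Derivative

theorem norm_gradient_eq_norm_fderiv {F : Type*} [NormedAddCommGroup F] [InnerProductSpace ℝ F]
    [CompleteSpace F] (f : F → ℝ) (x : F) : ‖gradient f x‖ = ‖fderiv ℝ f x‖ :=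
  (InnerProductSpace.toDual ℝ F).symm.norm_map _

section WeakSolution

variable {m : ℕ} {Ω : Set (Euc m)} {B : Euc m → ℝ}

theorem LocLipOn.inf {f g : Euc m → ℝ} (hf : LocLipOn Ω f) (hg : LocLipOn Ω g) :
    LocLipOn Ω (f ⊓ g) := fun A hA hAΩ => by
  obtain ⟨Kf, hKf⟩ := hf A hA hAΩ
  obtain ⟨Kg, hKg⟩ := hg A hA hAΩ
  exact ⟨_, hKf.inf hKg⟩

theorem LocLipOn.sup {f g : Euc m → ℝ} (hf : LocLipOn Ω f) (hg : LocLipOn Ω g) :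
    LocLipOn Ω (f ⊔ g) := fun A hA hAΩ => by
  obtain ⟨Kf, hKf⟩ := hf A hA hAΩ
  obtain ⟨Kg, hKg⟩ := hg A hA hAΩ
  exact ⟨_, hKf.sup hKg⟩

theorem integrableOn_norm_gradient_add_mul {f : Euc m → ℝ} {K : NNReal} {A U : Set (Euc m)}
    (hA : IsCompact A) (hU : IsOpen U) (hAU : A ⊆ U) (hf : LipschitzOnWith K f U)
    (hB : IntegrableOn B A) : IntegrableOn (fun x => ‖gradient f x‖ + f x * B x) A := by
  have hmeas : Measurable fun x => ‖gradient f x‖ := by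
    simpa only [norm_gradient_eq_norm_fderiv] using (measurable_fderiv ℝ f).norm
  have hgrad : IntegrableOn (fun x => ‖gradient f x‖) A :=
    .of_bound hA.measure_lt_top hmeas.aestronglyMeasurable K <|
      ae_restrict_of_forall_mem hA.measurableSet fun x hx => by
        rw [norm_norm, norm_gradient_eq_norm_fderiv]
        exact norm_fderiv_le_of_lipschitzOn ℝ (hU.mem_nhds (hAU hx)) hf
  exact hgrad.add (hB.continuousOn_mul (hf.continuousOn.mono hAU) hA)

theorem Jfun_inf_add_Jfun_sup (hΩ : IsOpen Ω) (hB : LocallyIntegrableOn B Ω) {A : Set (Euc m)}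
    (hA : IsCompact A) (hAΩ : A ⊆ Ω) {u v : Euc m → ℝ} (hu : LocLipOn Ω u) (hv : LocLipOn Ω v) :
    Jfun B A (v ⊓ u) + Jfun B A (v ⊔ u) = Jfun B A v + Jfun B A u := by
  obtain ⟨K, hK, hAK, hKΩ⟩ := exists_compact_between hA hΩ hAΩ
  obtain ⟨Ku, hKu⟩ := hu K hK hKΩ
  obtain ⟨Kv, hKv⟩ := hv K hK hKΩ
  have hKu' := hKu.mono interior_subset
  have hKv' := hKv.mono interior_subset
  have hint {f : Euc m → ℝ} {L : NNReal} (hf : LipschitzOnWith L f (interior K)) :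
      IntegrableOn (fun x => ‖gradient f x‖ + f x * B x) A :=
    integrableOn_norm_gradient_add_mul hA isOpen_interior hAK hf
      (hB.integrableOn_compact_subset hAΩ hA)
  unfold Jfun
  rw [← integral_add (hint (hKv'.inf hKu')) (hint (hKv'.sup hKu')),
    ← integral_add (hint hKv') (hint hKu')]
  refine integral_congr_ae ?_
  filter_upwards [ae_restrict_mem hA.measurableSet, ae_restrict_of_ae
    (ae_norm_fderiv_inf_add_norm_fderiv_sup isOpen_interior hKv' hKu')] with x hxA hx
  simp only [norm_gradient_eq_norm_fderiv, Pi.inf_apply, Pi.sup_apply]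
  linear_combination hx (hAK hxA) + B x * min_add_max (v x) (u x)

end WeakSolution

theorem weakSolution_iff_sub_and_super_general
    {d : ℕ} {Ω : Set (Euc d)} (hΩ : IsOpen Ω)
    (B : Euc d → ℝ) (hB : LocallyIntegrableOn B Ω)
    (u : Euc d → ℝ) (hu : LocLipOn Ω u) :
    IsWeakSol Ω B u ↔ IsWeakSub Ω B u ∧ IsWeakSup Ω B u := by
  refine ⟨fun hsol => ⟨fun A hA hAΩ v hv _ => hsol A hA hAΩ v hv,
    fun A hA hAΩ v hv _ => hsol A hA hAΩ v hv⟩, ?_⟩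
  rintro ⟨hsub, hsup⟩ A hA hAΩ v hv hsupp
  have hle_inf : Jfun B A u ≤ Jfun B A (v ⊓ u) :=
    hsub A hA hAΩ _ (hv.inf hu) (fun _ => inf_le_right) fun x hx =>
      hsupp fun hvx => hx (by simp [hvx])
  have hle_sup : Jfun B A u ≤ Jfun B A (v ⊔ u) :=
    hsup A hA hAΩ _ (hv.sup hu) (fun _ => le_sup_right) fun x hx =>
      hsupp fun hvx => hx (by simp [hvx])
  linarith [Jfun_inf_add_Jfun_sup hΩ hB hA hAΩ hu hv]

/-- A locally Lipschitz function is a weak solution if and only if it is both a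
weak subsolution and a weak supersolution (Section 6 of the paper). -/
theorem weakSolution_iff_sub_and_super
    {d : ℕ} (hd : 1 ≤ d) {Ω : Set (Euc d)} (hΩ : IsOpen Ω)
    (B : Euc d → ℝ) (hB : LocallyIntegrableOn B Ω)
    (u : Euc d → ℝ) (hu : LocLipOn Ω u) :
    IsWeakSol Ω B u ↔ IsWeakSub Ω B u ∧ IsWeakSup Ω B u :=
  weakSolution_iff_sub_and_super_general hΩ B hB u hu
end
end

section
/- Let C₂ ≥ 0 and λ ≥ 0, set A := 2(C₂ + λ + 4), let b_L > 0, and let 0 < ε ≤ e^{−A·b_L}. Define f : ℝ → ℝ by f(b) := (ε/A)·(e^{−A·b} − 1). Then for every b ∈ [0, b_L]: f'(b)·(C₂ + 2 + λ) + ε²·f''(b)/(ε² + f'(b)²) − f'(b)² − ε² > 0, where f'(b) = −ε·e^{−A·b} and f''(b) = A·ε·e^{−A·b} are the first and second derivatives of f. -/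
/-!
Write `E = e^{-Ab}`, so that `ε ≤ E ≤ 1`. The curvature term equals
`AεE / (1 + E²) ≥ AεE / 2 = εE(C₂ + λ + 4)`, which beats the first-order term
`-εE(C₂ + 2 + λ)` by `2εE`; and `2εE - (εE)² > ε²` because `ε ≤ E` and `εE < 1`.
-/

open Set

theorem hasDerivAt_exp_const_mul (c x : ℝ) :
    HasDerivAt (fun x => Real.exp (c * x)) (c * Real.exp (c * x)) x := by
  simpa [mul_comm] using ((hasDerivAt_id x).const_mul c).exp

theorem div_two_le_sq_mul_div_sq_add_sq {x ε E : ℝ} (hx : 0 ≤ x) (hε : 0 < ε) (hE : 0 ≤ E)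
    (hE1 : E ≤ 1) :
    x / 2 ≤ ε ^ 2 * x / (ε ^ 2 + (ε * E) ^ 2) :=
  calc x / 2 ≤ x / (1 + E ^ 2) :=
        div_le_div_of_nonneg_left hx (by positivity) (by nlinarith)
    _ = ε ^ 2 * x / (ε ^ 2 + (ε * E) ^ 2) := by
        field_simp

theorem sq_lt_two_mul_sub_sq {ε E : ℝ} (hε : 0 < ε) (hεE : ε ≤ E) (hε1 : ε < 1)
    (hE1 : E ≤ 1) :
    ε ^ 2 < 2 * (ε * E) - (ε * E) ^ 2 := by
  nlinarith [mul_le_mul_of_nonneg_left hεE hε.le, mul_lt_mul_of_pos_right hε1 hε,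
    mul_le_mul_of_nonneg_left hE1 hε.le]

/-- The barrier differential inequality (eq_subsolODI) from the proof of Theorem 4.4:
for `A = 2(C₂ + λ + 4)`, `0 < ε ≤ e^{−A·b_L}` and `f(b) = (ε/A)(e^{−A·b} − 1)`, with
`f'(b) = −ε e^{−A·b}` and `f''(b) = A ε e^{−A·b}` its derivatives, one has
`f'·(C₂ + 2 + λ) + ε²f''/(ε² + f'²) − f'² − ε² > 0` on `[0, b_L]`. -/
theorem barrier_subsolution_ODI
    (C₂ lam A bL ε : ℝ)
    (hC₂ : 0 ≤ C₂) (hlam : 0 ≤ lam) (hA : A = 2 * (C₂ + lam + 4))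
    (hbL : 0 < bL) (hε0 : 0 < ε) (hε : ε ≤ Real.exp (-A * bL))
    (f f' f'' : ℝ → ℝ)
    (hf : f = fun b => (ε / A) * (Real.exp (-A * b) - 1))
    (hf' : f' = fun b => -ε * Real.exp (-A * b))
    (hf'' : f'' = fun b => A * ε * Real.exp (-A * b)) :
    ∀ b ∈ Icc (0 : ℝ) bL,
      (HasDerivAt f (f' b) b ∧ HasDerivAt f' (f'' b) b) ∧
      0 < f' b * (C₂ + 2 + lam) + ε ^ 2 * f'' b / (ε ^ 2 + f' b ^ 2)
            - f' b ^ 2 - ε ^ 2 := by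
  rintro b ⟨hb0, hbL'⟩
  have hApos : 0 < A := by linarith
  have hexp := hasDerivAt_exp_const_mul (-A) b
  subst hf hf' hf''
  refine ⟨⟨?_, ?_⟩, ?_⟩
  · refine ((hexp.sub_const 1).const_mul (ε / A)).congr_deriv ?_
    field_simp
  · refine (hexp.const_mul (-ε)).congr_deriv ?_
    ring
  have hεE : ε ≤ Real.exp (-A * b) := hε.trans (Real.exp_le_exp.2 (by nlinarith))
  have hE1 : Real.exp (-A * b) ≤ 1 := Real.exp_le_one_iff.2 (by nlinarith)
  have hε1 : ε < 1 := hε.trans_lt (Real.exp_lt_one_iff.2 (by nlinarith))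
  beta_reduce
  generalize Real.exp (-A * b) = E at hεE hE1 ⊢
  have hE0 : 0 ≤ E := hε0.le.trans hεE
  have hcurv := div_two_le_sq_mul_div_sq_add_sq (x := A * ε * E) (by positivity) hε0 hE0 hE1
  have hhalf : A * ε * E / 2 = ε * E * (C₂ + lam + 4) := by rw [hA]; ring
  have hrest := sq_lt_two_mul_sub_sq hε0 hεE hε1 hE1
  rw [neg_mul, neg_sq]
  linarith
end

section
/- Let d ≥ 1, let Ω ⊆ ℝ^d be open, and let C ≥ 0. For each i ∈ ℕ, let V_i : Ω → ℝ^d be measurable with ‖V_i(x)‖ ≤ C for all x ∈ Ω, and let ν_i : Ω → ℝ^d be measurable with ‖ν_i(x)‖ = 1 and V_i(x) = ‖V_i(x)‖·ν_i(x) for almost every x ∈ Ω. Let ν : Ω → ℝ^d be continuous with ‖ν(x)‖ = 1 for all x, and suppose ν_i → ν uniformly on every compact subset of Ω. Assume that for every continuous compactly supported vector field W : Ω → ℝ^d one has ∫_Ω ⟨V_i(x), W(x)⟩ dx → 0 as i → ∞. Then ‖V_i‖ → 0 in L¹_loc(Ω), i.e. ∫_A ‖V_i(x)‖ dx → 0 as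 i → ∞ for every compact set A ⊆ Ω. -/
open MeasureTheory Set Filter Topology
noncomputable section

/-! Take a cutoff `φ` equal to `1` on `A` with compact support `K ⊆ Ω`, and test against
`W = φ • ν`. Writing `V_i = ‖V_i‖ ν_i`, one has `⟪V_i, ν⟫ ≥ ‖V_i‖ (1 - ‖ν_i - ν‖)`, so once
`ν_i` is `ε`-close to `ν` on `K` the integrand `⟪V_i, W⟫` is nonnegative on `Ω` and dominates
`‖V_i‖ - C ε` on `A`. Hence `∫_A ‖V_i‖ ≤ ∫_Ω ⟪V_i, W⟫ + C ε |A|`, and the right-hand side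
tends to `C ε |A|` by weak convergence. -/

open scoped ENNReal

theorem tendsto_zero_of_eventually_le_add_mul {ι : Type*} {l : Filter ι} {a b : ι → ℝ}
    (c : ℝ) (ha : ∀ i, 0 ≤ a i) (hb : Tendsto b l (𝓝 0))
    (h : ∀ᶠ ε in 𝓝[>] 0, ∀ᶠ i in l, a i ≤ b i + c * ε) : Tendsto a l (𝓝 0) := by
  refine tendsto_order.2 ⟨fun u hu => .of_forall fun i => hu.trans_le (ha i), fun u hu => ?_⟩
  have hcε : ∀ᶠ ε in 𝓝[>] (0 : ℝ), c * ε < u / 2 := by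
    have : Tendsto (fun ε : ℝ => c * ε) (𝓝[>] 0) (𝓝 0) := by
      simpa using ((continuous_const_mul c).tendsto 0).mono_left nhdsWithin_le_nhds
    exact this.eventually (gt_mem_nhds (half_pos hu))
  obtain ⟨ε, hε, hcε⟩ := (h.and hcε).exists
  filter_upwards [hε, hb.eventually (gt_mem_nhds (half_pos hu))] with i hi hbi
  linarith

section InnerProductSpace

variable {E : Type*} [NormedAddCommGroup E] [InnerProductSpace ℝ E]

theorem norm_mul_one_sub_norm_sub_le_inner {v n m : E} (hn : ‖n‖ = 1) (hv : v = ‖v‖ • n) :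
    ‖v‖ * (1 - ‖n - m‖) ≤ inner ℝ v m := by
  have hnm : 1 - ‖n - m‖ ≤ inner ℝ n m := by
    have hnn : inner ℝ n n = (1 : ℝ) := by rw [real_inner_self_eq_norm_sq, hn, one_pow]
    have := real_inner_le_norm n (n - m)
    rw [inner_sub_right, hnn, hn, one_mul] at this
    linarith
  calc ‖v‖ * (1 - ‖n - m‖) ≤ ‖v‖ * inner ℝ n m := by gcongr
    _ = inner ℝ v m := by rw [← real_inner_smul_left, ← hv]

variable {X : Type*} [MeasurableSpace X] {μ : Measure X}

theorem integrableOn_inner_of_norm_le {s : Set X} {v w : X → E} {C : ℝ} (hs : MeasurableSet s)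
    (hv : AEStronglyMeasurable v μ) (hvC : ∀ x ∈ s, ‖v x‖ ≤ C) (hw : Integrable w μ) :
    IntegrableOn (fun x => inner ℝ (v x) (w x)) s μ := by
  refine (hw.norm.const_mul C).integrableOn.mono' (hv.inner hw.1).restrict ?_
  filter_upwards [ae_restrict_mem hs] with x hx
  calc ‖(inner ℝ (v x) (w x) : ℝ)‖ ≤ ‖v x‖ * ‖w x‖ := norm_inner_le_norm _ _
    _ ≤ C * ‖w x‖ := by gcongr; exact hvC x hx

theorem setIntegral_le_setIntegral_add_mul_measureReal {A S : Set X} {f g : X → ℝ} {c : ℝ}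
    (hAS : A ⊆ S) (hμA : μ A ≠ ∞) (hf : IntegrableOn f A μ) (hg : IntegrableOn g S μ)
    (hg₀ : ∀ᵐ x ∂μ.restrict S, 0 ≤ g x) (hfg : ∀ᵐ x ∂μ.restrict A, f x ≤ g x + c) :
    ∫ x in A, f x ∂μ ≤ ∫ x in S, g x ∂μ + c * μ.real A := by
  have hgA : IntegrableOn g A μ := hg.mono_set hAS
  calc ∫ x in A, f x ∂μ ≤ ∫ x in A, (g x + c) ∂μ :=
        integral_mono_ae hf (hgA.add (integrableOn_const hμA)) hfg
    _ = ∫ x in A, g x ∂μ + c * μ.real A := by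
        rw [integral_add hgA (integrableOn_const hμA), setIntegral_const, smul_eq_mul, mul_comm]
    _ ≤ ∫ x in S, g x ∂μ + c * μ.real A := by
        grw [setIntegral_mono_set hg hg₀ hAS.eventuallyLE]

theorem setIntegral_norm_le_setIntegral_inner_smul_add {A S : Set X} {v n m : X → E}
    {φ : X → ℝ} {C ε : ℝ} (hA : MeasurableSet A) (hS : MeasurableSet S) (hAS : A ⊆ S)
    (hμA : μ A ≠ ∞) (hv : AEStronglyMeasurable v μ) (hvC : ∀ x ∈ S, ‖v x‖ ≤ C)
    (hpolar : ∀ᵐ x ∂μ, x ∈ S → ‖n x‖ = 1 ∧ v x = ‖v x‖ • n x)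
    (hφ₀ : ∀ x, 0 ≤ φ x) (hφA : EqOn φ 1 A)
    (hnm : ∀ x ∈ Function.support φ, ‖n x - m x‖ ≤ ε) (hε : ε ≤ 1)
    (hint : IntegrableOn (fun x => inner ℝ (v x) (φ x • m x)) S μ) :
    ∫ x in A, ‖v x‖ ∂μ ≤ ∫ x in S, inner ℝ (v x) (φ x • m x) ∂μ + C * ε * μ.real A := by
  have hvA : IntegrableOn (fun x => ‖v x‖) A μ :=
    Measure.integrableOn_of_bounded hμA hv.norm (M := C) <| by
      filter_upwards [ae_restrict_mem hA] with x hx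
      simpa using hvC x (hAS hx)
  refine setIntegral_le_setIntegral_add_mul_measureReal hAS hμA hvA hint ?_ ?_
  · filter_upwards [ae_restrict_mem hS, ae_restrict_of_ae hpolar] with x hxS hx
    obtain ⟨hn, hvn⟩ := hx hxS
    rw [real_inner_smul_right]
    by_cases hφx : φ x = 0
    · simp [hφx]
    · have hclose : 0 ≤ ‖v x‖ * (1 - ‖n x - m x‖) :=
        mul_nonneg (norm_nonneg _) (by linarith [hnm x hφx])
      exact mul_nonneg (hφ₀ x) (hclose.trans (norm_mul_one_sub_norm_sub_le_inner hn hvn))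
  · filter_upwards [ae_restrict_mem hA, ae_restrict_of_ae hpolar] with x hxA hx
    obtain ⟨hn, hvn⟩ := hx (hAS hxA)
    have hφx : φ x = 1 := hφA hxA
    have hclose : ‖v x‖ * ‖n x - m x‖ ≤ C * ε :=
      mul_le_mul (hvC x (hAS hxA)) (hnm x (by simp [hφx])) (norm_nonneg _)
        ((norm_nonneg _).trans (hvC x (hAS hxA)))
    rw [hφx, one_smul]
    linarith [norm_mul_one_sub_norm_sub_le_inner (m := m x) hn hvn]

end InnerProductSpace

theorem l1_convergence_in_jump_region_general
    {d : ℕ} {Ω : Set (Euc d)} (hΩ : IsOpen Ω) (C : ℝ)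
    (V : ℕ → Euc d → Euc d) (νi : ℕ → Euc d → Euc d) (ν : Euc d → Euc d)
    (hVmeas : ∀ i, Measurable (V i))
    (hVbd : ∀ i, ∀ x ∈ Ω, ‖V i x‖ ≤ C)
    (hpolar : ∀ i, ∀ᵐ x : Euc d, x ∈ Ω → (‖νi i x‖ = 1 ∧ V i x = ‖V i x‖ • νi i x))
    (hνcont : ContinuousOn ν Ω)
    (hνconv : ∀ A : Set (Euc d), IsCompact A → A ⊆ Ω →
      TendstoUniformlyOn (fun i => νi i) ν atTop A)
    (hweak : ∀ W : Euc d → Euc d, Continuous W → HasCompactSupport W → tsupport W ⊆ Ω →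
      Tendsto (fun i => ∫ x in Ω, (inner ℝ (V i x) (W x) : ℝ)) atTop (𝓝 0)) :
    ∀ A : Set (Euc d), IsCompact A → A ⊆ Ω →
      Tendsto (fun i => ∫ x in A, ‖V i x‖) atTop (𝓝 0) := by
  intro A hA hAΩ
  obtain ⟨φ, hφA, hK, hKΩ, hφ01⟩ := exists_continuousMap_one_of_isCompact_subset_isOpen hA hΩ hAΩ
  set W : Euc d → Euc d := fun x => φ x • ν x
  have hWΩ : tsupport W ⊆ Ω := (tsupport_smul_subset_left _ _).trans hKΩ
  have hWcont : Continuous W :=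
    (φ.continuous.continuousOn.smul hνcont).continuous_of_tsupport_subset hΩ hWΩ
  have hWcs : HasCompactSupport W := hK.of_isClosed_subset (isClosed_tsupport _)
    (tsupport_smul_subset_left _ _)
  refine tendsto_zero_of_eventually_le_add_mul (C * volume.real A)
    (fun i => setIntegral_nonneg hA.measurableSet fun x _ => norm_nonneg _)
    (hweak W hWcont hWcs hWΩ) ?_
  filter_upwards [Ioo_mem_nhdsGT one_pos] with ε hε
  filter_upwards [Metric.tendstoUniformlyOn_iff.1 (hνconv _ hK hKΩ) ε hε.1] with i hi
  have hclose : ∀ x ∈ Function.support φ, ‖νi i x - ν x‖ ≤ ε := fun x hx => by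
    simpa [dist_eq_norm'] using (hi x (subset_tsupport _ hx)).le
  have hint : IntegrableOn (fun x => inner ℝ (V i x) (W x)) Ω :=
    integrableOn_inner_of_norm_le hΩ.measurableSet (hVmeas i).aestronglyMeasurable (hVbd i)
      (hWcont.integrable_of_hasCompactSupport hWcs)
  rw [mul_right_comm]
  exact setIntegral_norm_le_setIntegral_inner_smul_add hA.measurableSet hΩ.measurableSet hAΩ
    hA.measure_lt_top.ne (hVmeas i).aestronglyMeasurable (hVbd i) (hpolar i)
    (fun x => (hφ01 x).1) hφA hclose hε.2.le hint

/-- Euclidean abstraction of Lemma 5.8 (L¹ convergence of the gradients inside a jump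
region): uniformly bounded vector fields `V_i` with unit directions `ν_i` converging
locally uniformly to a continuous unit field `ν`, and converging weakly to `0` against
compactly supported continuous test fields, converge to `0` in `L¹_loc`. -/
theorem l1_convergence_in_jump_region
    {d : ℕ} (hd : 1 ≤ d) {Ω : Set (Euc d)} (hΩ : IsOpen Ω) (C : ℝ) (hC : 0 ≤ C)
    (V : ℕ → Euc d → Euc d) (νi : ℕ → Euc d → Euc d) (ν : Euc d → Euc d)
    (hVmeas : ∀ i, Measurable (V i))
    (hVbd : ∀ i, ∀ x ∈ Ω, ‖V i x‖ ≤ C)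
    (hνimeas : ∀ i, Measurable (νi i))
    (hpolar : ∀ i, ∀ᵐ x : Euc d, x ∈ Ω → (‖νi i x‖ = 1 ∧ V i x = ‖V i x‖ • νi i x))
    (hνcont : ContinuousOn ν Ω) (hνunit : ∀ x ∈ Ω, ‖ν x‖ = 1)
    (hνconv : ∀ A : Set (Euc d), IsCompact A → A ⊆ Ω →
      TendstoUniformlyOn (fun i => νi i) ν atTop A)
    (hweak : ∀ W : Euc d → Euc d, Continuous W → HasCompactSupport W → tsupport W ⊆ Ω →
      Tendsto (fun i => ∫ x in Ω, (inner ℝ (V i x) (W x) : ℝ)) atTop (𝓝 0)) :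
    ∀ A : Set (Euc d), IsCompact A → A ⊆ Ω →
      Tendsto (fun i => ∫ x in A, ‖V i x‖) atTop (𝓝 0) :=
  l1_convergence_in_jump_region_general hΩ C V νi ν hVmeas hVbd hpolar hνcont hνconv hweak
end
end
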